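/- Let ρ ∈ (−1, 0]. Then the function ω ↦ 2(1 − cos ω) · S_ρ(ω), where S_ρ(ω) = (1 − ρ²)/(1 + ρ² − 2ρ·cos ω), is monotone nondecreasing on [0, π] and attains its maximum on [0, π] at ω = π, with maximal value 4(1 − ρ)/(1 + ρ). -/
import Mathlib


open scoped Real

/-- Constructive alignment in the antiphase regime: for `ρ ∈ (−1, 0]`, the filtered
spectrum `ω ↦ 2(1 − cos ω) · S_ρ(ω)`, with `S_ρ(ω) = (1 − ρ²)/(1 + ρ² − 2ρ cos ω)`, is
monotone nondecreasing on `[0, π]` and attains its maximum on `[0, π]` at `ω = π`, with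
maximal value `4(1 − ρ)/(1 + ρ)`. -/
theorem filtered_spectrum_monotone_antiphase (ρ : ℝ) (hρ : ρ ∈ Set.Ioc (-1 : ℝ) 0)
    (G : ℝ → ℝ)
    (hG : ∀ ω, G ω = 2 * (1 - Real.cos ω) *
      ((1 - ρ ^ 2) / (1 + ρ ^ 2 - 2 * ρ * Real.cos ω))) :
    MonotoneOn G (Set.Icc 0 π) ∧
    (∀ ω ∈ Set.Icc (0 : ℝ) π, G ω ≤ G π) ∧
    G π = 4 * (1 - ρ) / (1 + ρ) := by
  obtain ⟨h1, h2⟩ := hρ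
  have hρ1 : (0:ℝ) < 1 + ρ := by linarith
  have hmono : MonotoneOn G (Set.Icc 0 π) := by
    intro x hx y hy hxy
    rw [hG, hG]
    have hcy : Real.cos y ≤ Real.cos x :=
      Real.cos_le_cos_of_nonneg_of_le_pi hx.1 hy.2 hxy
    have hax : Real.cos x ≤ 1 := Real.cos_le_one x
    have hbx : -1 ≤ Real.cos x := Real.neg_one_le_cos x
    have hby : -1 ≤ Real.cos y := Real.neg_one_le_cos y
    set a := Real.cos x
    set b := Real.cos y
    have hDa : 0 < 1 + ρ ^ 2 - 2 * ρ * a := by nlinarith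
    have hDb : 0 < 1 + ρ ^ 2 - 2 * ρ * b := by nlinarith
    rw [mul_div_assoc' (2 * (1 - a)), mul_div_assoc' (2 * (1 - b)), div_le_div_iff₀ hDa hDb]
    nlinarith [mul_nonneg (mul_nonneg (sub_nonneg.2 hcy) (sq_nonneg (1 - ρ)))
      (by nlinarith : (0:ℝ) ≤ 1 - ρ ^ 2)]
  refine ⟨hmono, ?_, ?_⟩
  · intro ω hω
    exact hmono hω ⟨Real.pi_pos.le, le_rfl⟩ hω.2
  · rw [hG, Real.cos_pi]
    have h2 : (1 + ρ ^ 2 - 2 * ρ * (-1)) = (1 + ρ) ^ 2 := by ring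
    rw [h2]
    field_simp
    ring
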